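/- The graph G₁ has no divisor class of degree 2 and Baker–Norine rank at least 1; that is, every divisor D on G₁ with deg(D) = 2 satisfies r(D) ≤ 0. -/

import Mathlib

open scoped Classical

namespace BNGraph

variable {V : Type} [Fintype V]

/-- The degree of a divisor `D : V → ℤ`: the sum of its values. -/
def degSum (D : V → ℤ) : ℤ := ∑ v, D v

/-- A divisor is effective if all its values are nonnegative. -/
def Effective (D : V → ℤ) : Prop := ∀ v, 0 ≤ D v

/-- The combinatorial Laplacian of a graph, as a homomorphism on divisors. -/
noncomputable def lap (G : SimpleGraph V) : (V → ℤ) →+ (V → ℤ) where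
  toFun f := fun v => (G.degree v : ℤ) * f v - ∑ w ∈ G.neighborFinset v, f w
  map_zero' := by
    funext v; simp
  map_add' f g := by
    funext v
    simp only [Pi.add_apply, Finset.sum_add_distrib]
    ring

/-- The subgroup of principal divisors: the image of the Laplacian. -/
noncomputable def Principal (G : SimpleGraph V) : AddSubgroup (V → ℤ) := (lap G).range

/-- Linear equivalence of divisors. -/
def LinEquiv (G : SimpleGraph V) (D D' : V → ℤ) : Prop := D - D' ∈ Principal G

/-- A divisor is winnable if it is linearly equivalent to an effective divisor. -/
def Winnable (G : SimpleGraph V) (D : V → ℤ) : Prop :=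
  ∃ E : V → ℤ, Effective E ∧ LinEquiv G D E

/-- The Baker–Norine rank of a divisor: the largest `r ≥ 0` such that `D - E` is
winnable for every effective divisor `E` of degree `r`, or `-1` if there is no such `r`
(equivalently, if `D` itself is not winnable). -/
noncomputable def bnRank (G : SimpleGraph V) (D : V → ℤ) : ℤ :=
  sSup {r : ℤ | r = -1 ∨ (0 ≤ r ∧
    ∀ E : V → ℤ, Effective E → degSum E = r → Winnable G (D - E))}

/-- The Picard group of a graph: divisors modulo principal divisors. -/
abbrev Pic (G : SimpleGraph V) : Type _ := (V → ℤ) ⧸ Principal G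

/-- The number of divisor classes of degree `d` and Baker–Norine rank `r`. -/
noncomputable def numClasses (G : SimpleGraph V) (d r : ℤ) : ℕ :=
  Set.ncard {c : Pic G | ∃ D : V → ℤ,
    QuotientAddGroup.mk' (Principal G) D = c ∧ degSum D = d ∧ bnRank G D = r}

/-- Two graphs have the same two-variable zeta function iff for every degree `d` and
rank `r` they have the same number of divisor classes of degree `d` and rank `r`. -/
def SameZeta {W : Type} [Fintype W] (G : SimpleGraph V) (G' : SimpleGraph W) : Prop :=
  ∀ d r : ℤ, numClasses G d r = numClasses G' d r

/-- Degree as a homomorphism on divisors. -/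
def degHom : (V → ℤ) →+ ℤ where
  toFun := degSum
  map_zero' := by simp [degSum]
  map_add' f g := by simp [degSum, Finset.sum_add_distrib]

/-- The subgroup of divisors of degree zero. -/
def Deg0 (V : Type) [Fintype V] : AddSubgroup (V → ℤ) := (degHom (V := V)).ker

/-- The Jacobian of a graph: divisor classes of degree zero. -/
noncomputable abbrev Jac (G : SimpleGraph V) : Type _ :=
  Deg0 V ⧸ ((Principal G).addSubgroupOf (Deg0 V))

/-- The number of connected components of the spanning subgraph with edge set `A`. -/
noncomputable def numComponents (V : Type) [Fintype V] (A : Set (Sym2 V)) : ℕ :=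
  Nat.card (SimpleGraph.fromEdgeSet A).ConnectedComponent

/-- The number of edges of a graph. -/
noncomputable def edgeCount (G : SimpleGraph V) : ℕ := Nat.card G.edgeSet

open MvPolynomial in
/-- The Tutte polynomial of `G`, as a polynomial in `ℤ[x, y]` with `x = X 0`, `y = X 1`:
`T_G(x,y) = Σ_{A ⊆ E(G)} (x−1)^(c(A)−c(E(G))) (y−1)^(c(A)+|A|−|V(G)|)`. -/
noncomputable def tutte (G : SimpleGraph V) : MvPolynomial (Fin 2) ℤ :=
  ∑ A ∈ G.edgeFinset.powerset,
    (X 0 - 1) ^ (numComponents V ↑A - numComponents V G.edgeSet) *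
    (X 1 - 1) ^ (numComponents V ↑A + A.card - Fintype.card V)


/-- `G₁`: the diamond graph (`K₄` minus an edge) on vertices `0,1,2,3`
(with `u = 0`, `v = 1` of degree 3 and `x = 2`, `y = 3` of degree 2),
with a triangle `0,4,5` attached at the vertex `u = 0`. -/
def G1 : SimpleGraph (Fin 6) :=
  SimpleGraph.fromEdgeSet
    {s(0,1), s(0,2), s(0,3), s(1,2), s(1,3), s(0,4), s(0,5), s(4,5)}

/-!
The vector `c = g1Char = (0, 6, 3, 15, 8, 16)` has Laplacian divisible by 24, so
`D ↦ c · D mod 24` is a character of `Pic(G₁)` (in fact an isomorphism `Jac(G₁) ≅ ℤ/24`).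
If `D` has degree 2 and rank at least 1, then for every vertex `w` the divisor `D - w` is
equivalent to an effective divisor of degree 1, i.e. `D ~ w + v` for some vertex `v`, so
`c · D ∈ c(w) + c(V)` in `ℤ/24` for every `w`. But the translates
`c(w) + {0, 3, 6, 8, 15, 16}` have empty intersection.
-/

open Matrix

section Laplacian

variable (G : SimpleGraph V)

lemma lap_eq_lapMatrix_mulVec (f : V → ℤ) : lap G f = G.lapMatrix ℤ *ᵥ f := by
  funext v
  rw [SimpleGraph.lapMatrix_mulVec_apply]
  rfl

lemma lap_apply_eq_sum_adj (f : V → ℤ) (v : V) :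
    lap G f v = ∑ w, if G.Adj v w then f v - f w else 0 := by
  rw [← Finset.sum_filter, ← SimpleGraph.neighborFinset_eq_filter, Finset.sum_sub_distrib,
    Finset.sum_const, SimpleGraph.card_neighborFinset_eq_degree, nsmul_eq_mul]
  rfl

lemma dotProduct_lap_comm (c f : V → ℤ) : c ⬝ᵥ lap G f = lap G c ⬝ᵥ f := by
  rw [lap_eq_lapMatrix_mulVec, lap_eq_lapMatrix_mulVec, dotProduct_mulVec, ← mulVec_transpose,
    (SimpleGraph.isSymm_lapMatrix (R := ℤ) G).eq]

end Laplacian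

section Divisors

variable {G : SimpleGraph V}

lemma degSum_eq_one_dotProduct (D : V → ℤ) : degSum D = 1 ⬝ᵥ D :=
  (one_dotProduct D).symm

lemma degSum_sub (D D' : V → ℤ) : degSum (D - D') = degSum D - degSum D' :=
  Finset.sum_sub_distrib _ _

lemma degSum_single (w : V) (r : ℤ) : degSum (Pi.single w r) = r := by
  simp [degSum]

lemma degSum_eq_zero_of_mem_principal {X : V → ℤ} (hX : X ∈ Principal G) :
    degSum X = 0 := by
  obtain ⟨f, rfl⟩ := hX
  rw [degSum_eq_one_dotProduct, dotProduct_lap_comm, lap_eq_lapMatrix_mulVec,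
    show (1 : V → ℤ) = fun _ ↦ 1 from rfl, SimpleGraph.lapMatrix_mulVec_const_eq_zero,
    zero_dotProduct]

lemma dvd_dotProduct_of_mem_principal {n : ℤ} {c X : V → ℤ} (hc : ∀ v, n ∣ lap G c v)
    (hX : X ∈ Principal G) : n ∣ c ⬝ᵥ X := by
  obtain ⟨f, rfl⟩ := hX
  rw [dotProduct_lap_comm]
  exact Finset.dvd_sum fun v _ ↦ (hc v).mul_right _

lemma LinEquiv.intCast_dotProduct_eq {n : ℕ} {c D D' : V → ℤ}
    (hc : ∀ v, (n : ℤ) ∣ lap G c v) (h : LinEquiv G D D') :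
    ((c ⬝ᵥ D : ℤ) : ZMod n) = ((c ⬝ᵥ D' : ℤ) : ZMod n) := by
  rw [← sub_eq_zero, ← Int.cast_sub, ← dotProduct_sub, ZMod.intCast_zmod_eq_zero_iff_dvd]
  exact dvd_dotProduct_of_mem_principal hc h

lemma Winnable.add_effective {D E : V → ℤ} (h : Winnable G D) (hE : Effective E) :
    Winnable G (D + E) := by
  obtain ⟨F, hF, hDF⟩ := h
  refine ⟨F + E, fun v ↦ add_nonneg (hF v) (hE v), ?_⟩
  rwa [LinEquiv, add_sub_add_right_eq_sub]

lemma bnRank_le_zero_of_not_winnable {D : V → ℤ} (w : V)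
    (h : ¬ Winnable G (D - Pi.single w 1)) : bnRank G D ≤ 0 := by
  refine csSup_le ⟨-1, Or.inl rfl⟩ ?_
  rintro r (rfl | ⟨hr, hwin⟩)
  · norm_num
  by_contra! hpos
  have effective_single {s : ℤ} (hs : 0 ≤ s) : Effective (Pi.single w s) := fun v ↦ by
    rw [Pi.single_apply]
    split <;> omega
  have hrw := hwin (Pi.single w r) (effective_single hr) (degSum_single w r)
  have hsplit : D - Pi.single w 1 = (D - Pi.single w r) + Pi.single w (r - 1) := by
    rw [Pi.single_sub]
    abel
  exact h (hsplit ▸ Winnable.add_effective hrw (effective_single (by omega)))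

lemma eq_single_of_effective_of_degSum_eq_one {E : V → ℤ} (hE : Effective E)
    (hdeg : degSum E = 1) : ∃ v, E = Pi.single v 1 := by
  obtain ⟨v, -, hv⟩ : ∃ v ∈ Finset.univ, (0 : V → ℤ) v < E v :=
    Finset.exists_lt_of_sum_lt (by
      change _ < degSum E
      simp [hdeg])
  have hrest : Effective (E - Pi.single v 1) := by
    intro u
    rw [Pi.sub_apply, Pi.single_apply]
    split
    · subst u
      change 0 < E _ at hv
      omega
    · simpa using hE u
  have hzero : degSum (E - Pi.single v 1) = 0 := by
    rw [degSum_sub, hdeg, degSum_single, sub_self]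
  refine ⟨v, funext fun u ↦ ?_⟩
  have := (Finset.sum_eq_zero_iff_of_nonneg fun u _ ↦ hrest u).1 hzero u (Finset.mem_univ u)
  rwa [Pi.sub_apply, sub_eq_zero] at this

lemma exists_linEquiv_single_of_winnable {D : V → ℤ} (hdeg : degSum D = 1)
    (h : Winnable G D) : ∃ v, LinEquiv G D (Pi.single v 1) := by
  obtain ⟨E, hE, hDE⟩ := h
  have hEdeg : degSum E = 1 := by
    have := degSum_eq_zero_of_mem_principal hDE
    rw [degSum_sub, hdeg] at this
    omega
  obtain ⟨v, rfl⟩ := eq_single_of_effective_of_degSum_eq_one hE hEdeg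
  exact ⟨v, hDE⟩

end Divisors

def g1Char : Fin 6 → ℤ := ![0, 6, 3, 15, 8, 16]

lemma lap_G1_g1Char : lap G1 g1Char = ![-48, 0, 0, 24, 0, 24] := by
  funext v
  fin_cases v <;> simp [lap_apply_eq_sum_adj, Fin.sum_univ_six, G1, g1Char]

lemma dvd_lap_G1_g1Char (v : Fin 6) : (24 : ℤ) ∣ lap G1 g1Char v := by
  rw [lap_G1_g1Char]
  fin_cases v <;> decide

lemma exists_forall_ne_g1Char_add (a : ZMod 24) :
    ∃ w, ∀ v, a ≠ ((g1Char w + g1Char v : ℤ) : ZMod 24) := by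
  revert a
  decide

/-- `G₁` has no divisor class of degree 2 and Baker–Norine rank at least 1: every
divisor of degree 2 on `G₁` has rank at most 0. -/
theorem G1_no_degTwo_rankGeOne_class :
    ∀ D : Fin 6 → ℤ, degSum D = 2 → bnRank G1 D ≤ 0 := by
  intro D hD
  obtain ⟨w, hw⟩ := exists_forall_ne_g1Char_add ((g1Char ⬝ᵥ D : ℤ) : ZMod 24)
  refine bnRank_le_zero_of_not_winnable w fun hwin ↦ ?_
  obtain ⟨v, hv⟩ := exists_linEquiv_single_of_winnable
    (by rw [degSum_sub, hD, degSum_single]; norm_num) hwin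
  have hchar := LinEquiv.intCast_dotProduct_eq (n := 24) dvd_lap_G1_g1Char hv
  simp only [dotProduct_sub, dotProduct_single, mul_one] at hchar
  apply hw v
  push_cast at hchar ⊢
  linear_combination hchar

end BNGraph
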